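/- arXiv:math/0202028 — 2 statements merged into one kernel-verified Lean document; each statement's English description precedes it below -/
import Mathlib

section
/- Let M ⊆ V[t,t⁻¹] be a graded k[t]-submodule for which there exists N ∈ ℕ with t^N · (V ⊗ k[t]) ⊆ M ⊆ t^{−N} · (V ⊗ k[t]). Then: F_M(n+1) ⊆ F_M(n) for every n ∈ ℤ; F_M(n) = V for all n ≤ −N; F_M(n) = 0 for all n > N; M = ⊕_{n ∈ ℤ} F_M(n) ⊗ t^{−n}, i.e. every element of M is a finite sum of homogeneous elements v ⊗ t^{−n} with v ∈ F_M(n); and M is a free k[t]-module of rank dim_k V. (This is the paper's Corollary 'cutting down' together with Corollary 'def of ρ', giving the correspondence between graded submodules of the formal loop space and decreasing filtrations.) -/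
/-!
Choose a basis `e` of `V` adapted to the filtration `F_M`, by extending, step by step from the
top, a basis of `F_M(n + 1)` to one of `F_M(n)`, and let `ρ i` be the largest `n` with
`e i ∈ F_M(n)`. Since `M` is graded, it is spanned by its homogeneous pieces `F_M(n) ⊗ t^{-n}`,
so the vectors `t^j · (e i ⊗ t^{-ρ i})`, `j ∈ ℕ`, form a `k`-basis of `M`: a `k[t]`-basis indexed
by the basis of `V`.
-/

open Set Submodule Finsupp Module

section Filtration

variable {k V : Type*} [DivisionRing k] [AddCommGroup V] [Module k V] {F : ℤ → Submodule k V}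

theorem Antitone.exists_linearIndepOn_adapted (hF : Antitone F) {b : ℤ} (hb : F b = ⊥)
    (m : ℕ) : ∃ s : Set V, LinearIndepOn k id s ∧ s ⊆ F (b - m) ∧
      ∀ n, b - m ≤ n → F n ≤ span k (s ∩ F n) := by
  induction m with
  | zero =>
    refine ⟨∅, linearIndepOn_empty k id, empty_subset _, fun n hn => ?_⟩
    simpa [hb] using hF (show b ≤ n by simpa using hn)
  | succ m ih =>
    obtain ⟨s, hs, hsF, hspan⟩ := ih
    set F' := F (b - (m + 1 : ℕ))
    obtain ⟨s', hs'F', hss', hF's', hs'⟩ :=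
      exists_linearIndepOn_id_extension hs (subset_union_left (t := (F' : Set V)))
    have hs'F : s' ⊆ F' := hs'F'.trans (union_subset (hsF.trans (hF (by omega))) subset_rfl)
    refine ⟨s', hs', hs'F, fun n hn => ?_⟩
    rcases hn.eq_or_lt with rfl | hlt
    · rw [inter_eq_left.mpr hs'F]
      exact fun x hx => hF's' (Or.inr hx)
    · exact (hspan n (by omega)).trans (span_mono (inter_subset_inter_left _ hss'))

theorem Antitone.exists_greatest_mem (hF : Antitone F) {b : ℤ} (hb : F b = ⊥) {x : V}
    (hx : x ≠ 0) {a : ℤ} (ha : x ∈ F a) : ∃ r, x ∈ F r ∧ ∀ n, x ∈ F n → n ≤ r :=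
  Int.exists_greatest_of_bdd
    ⟨b, fun n hn => le_of_not_gt fun h => hx (by simpa [hb] using hF h.le hn)⟩ ⟨a, ha⟩

theorem Antitone.exists_basis_adapted [FiniteDimensional k V] (hF : Antitone F) {a b : ℤ}
    (ha : F a = ⊤) (hb : F b = ⊥) :
    ∃ (e : Basis (Fin (finrank k V)) k V) (ρ : Fin (finrank k V) → ℤ),
      (∀ i, e i ∈ F (ρ i)) ∧ ∀ n, F n ≤ span k (e '' {i | n ≤ ρ i}) := by
  obtain ⟨s, hs, hsF, hspan⟩ := hF.exists_linearIndepOn_adapted hb (b - a).toNat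
  have hs_top : ⊤ ≤ span k s := by
    rw [← ha]
    exact (hspan a (by omega)).trans (span_mono inter_subset_left)
  have hspan_all : ∀ n, F n ≤ span k (s ∩ F n) := by
    intro n
    rcases le_or_gt (b - (b - a).toNat) n with h | h
    · exact hspan n h
    · rw [inter_eq_left.mpr (hsF.trans (hF h.le))]
      exact le_top.trans hs_top
  choose ρ hρF hρmax using fun x : s => hF.exists_greatest_mem hb (hs.ne_zero x.2) (hsF x.2)
  let e₀ : Basis s k V := .mk hs.linearIndependent (by simpa using hs_top)
  let σ := e₀.indexEquiv (finBasis k V)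
  refine ⟨e₀.reindex σ, fun i => ρ (σ.symm i), fun i => by simpa [e₀] using hρF _, fun n => ?_⟩
  refine (hspan_all n).trans (span_mono ?_)
  rintro x ⟨hxs, hxn⟩
  exact ⟨σ ⟨x, hxs⟩, by simpa using hρmax _ _ hxn, by simp [e₀]⟩

end Filtration

theorem Submodule.eq_iSup_map_lsingle_comap {R ι V : Type*} [Semiring R] [AddCommMonoid V]
    [Module R V] (M : Submodule R (ι →₀ V)) (hM : ∀ f ∈ M, ∀ p, single p (f p) ∈ M) :
    M = ⨆ p, (M.comap (lsingle p)).map (lsingle p) := by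
  refine le_antisymm (fun f hf => ?_) (iSup_le fun p => map_comap_le _ _)
  rw [← f.sum_single]
  exact sum_mem fun p _ => mem_iSup_of_mem p (mem_map_of_mem (hM f hf p))

section LoopSpace

variable {k V ι : Type*} [Semiring k] [AddCommMonoid V] [Module k V]

theorem pow_apply_single_of_shift {T : Module.End k (ℤ →₀ V)}
    (hT : ∀ p v, T (single p v) = single (p + 1) v) (j : ℕ) (p : ℤ) (v : V) :
    (T ^ j) (single p v) = single (p + j) v := by
  induction j with
  | zero => simp
  | succ j ih => rw [pow_succ', Module.End.mul_apply, ih, hT, Nat.cast_succ, add_assoc]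

theorem linearIndependent_single_neg_add {e : ι → V} (he : LinearIndependent k e) (ρ : ι → ℤ) :
    LinearIndependent k fun ij : ι × ℕ => single (-ρ ij.1 + ij.2) (e ij.1) := by
  let g : ι × ℕ → Σ _ : ℤ, ι := fun ij => ⟨-ρ ij.1 + ij.2, ij.1⟩
  have hg : Function.Injective g := by
    rintro ⟨i, j⟩ ⟨i', j'⟩ h
    simp only [g, Sigma.mk.inj_iff, heq_eq_eq] at h
    obtain ⟨h, rfl⟩ := h
    simp only [Prod.mk.injEq, true_and]
    omega
  exact (linearIndependent_single _ fun _ => he).comp g hg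

theorem span_range_single_neg_add_eq {M : Submodule k (ℤ →₀ V)} {e : ι → V} {ρ : ι → ℤ}
    (hmem : ∀ i (j : ℕ), single (-ρ i + j) (e i) ∈ M)
    (hspan : ∀ f ∈ M, ∀ p, f p ∈ span k (e '' {i | -p ≤ ρ i})) :
    span k (range fun ij : ι × ℕ => single (-ρ ij.1 + ij.2) (e ij.1)) = M := by
  refine le_antisymm (span_le.mpr (range_subset_iff.mpr fun ij => hmem ij.1 ij.2)) fun f hf => ?_
  rw [← f.sum_single]
  refine sum_mem fun p _ => ?_
  have := mem_map_of_mem (f := lsingle (R := k) p) (hspan f hf p)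
  rw [map_span, ← image_comp] at this
  refine span_mono ?_ this
  rintro _ ⟨i, hi, rfl⟩
  refine ⟨(i, (p + ρ i).toNat), ?_⟩
  simp only [Function.comp_apply, lsingle_apply]
  have hi : -p ≤ ρ i := hi
  congr 1
  omega

end LoopSpace

/-- A graded `k[t]`-submodule `M` of the formal loop space `V[t,t⁻¹]` (modelled as `ℤ →₀ V`,
with `T` the multiplication-by-`t` operator) squeezed between `t^N·(V ⊗ k[t])` and
`t^{-N}·(V ⊗ k[t])` corresponds to a decreasing, exhausting and separating filtration
`F_M(n) = {v | v ⊗ t^{-n} ∈ M}`: the filtration is decreasing, equals `V` for `n ≤ -N`,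
vanishes for `n > N`, `M = ⊕_n F_M(n) ⊗ t^{-n}`, and `M` is a free `k[t]`-module of rank
`dim_k V`, i.e. it admits a `k`-basis of the form `{T^j (v i)}` indexed by
`Fin (dim V) × ℕ`. -/
theorem stmt_3 {k V : Type*} [Field k] [AddCommGroup V] [Module k V] [FiniteDimensional k V]
    (T : Module.End k (ℤ →₀ V))
    (hT : ∀ (p : ℤ) (v : V), T (Finsupp.single p v) = Finsupp.single (p + 1) v)
    (M : Submodule k (ℤ →₀ V))
    (hTM : ∀ f ∈ M, T f ∈ M)
    (hgraded : ∀ f ∈ M, ∀ p : ℤ, Finsupp.single p (f p) ∈ M)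
    (N : ℕ)
    (hlow : ∀ (p : ℤ) (v : V), (N : ℤ) ≤ p → Finsupp.single p v ∈ M)
    (hhigh : ∀ f ∈ M, ∀ p : ℤ, p < -(N : ℤ) → f p = 0)
    (FM : ℤ → Submodule k V)
    (hFM : ∀ n : ℤ, FM n = M.comap (Finsupp.lsingle (-n))) :
    (∀ n : ℤ, FM (n + 1) ≤ FM n) ∧
    (∀ n : ℤ, n ≤ -(N : ℤ) → FM n = ⊤) ∧
    (∀ n : ℤ, (N : ℤ) < n → FM n = ⊥) ∧
    (M = ⨆ n : ℤ, (FM n).map (Finsupp.lsingle (-n))) ∧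
    (∃ (v : Fin (Module.finrank k V) → (ℤ →₀ V))
       (b : Module.Basis (Fin (Module.finrank k V) × ℕ) k M),
        ∀ (i : Fin (Module.finrank k V)) (j : ℕ), (b (i, j) : ℤ →₀ V) = (T ^ j) (v i)) := by
  have hmem : ∀ n x, x ∈ FM n ↔ single (-n) x ∈ M := fun n x => by rw [hFM]; rfl
  have hdecr : ∀ n, FM (n + 1) ≤ FM n := fun n x hx => by
    rw [hmem] at hx ⊢
    simpa [hT, show -(n + 1) + 1 = -n by ring] using hTM _ hx
  have htop : ∀ n ≤ -(N : ℤ), FM n = ⊤ := fun n hn =>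
    eq_top_iff.mpr fun x _ => (hmem n x).mpr (hlow _ x (by omega))
  have hbot : ∀ n, (N : ℤ) < n → FM n = ⊥ := fun n hn =>
    eq_bot_iff.mpr fun x hx => by simpa using hhigh _ ((hmem n x).mp hx) (-n) (by omega)
  have hanti := antitone_int_of_succ_le hdecr
  obtain ⟨e, ρ, heF, hFe⟩ := hanti.exists_basis_adapted (htop _ le_rfl) (hbot (N + 1) (by omega))
  have hli := linearIndependent_single_neg_add e.linearIndependent ρ
  have hspan := span_range_single_neg_add_eq (M := M)
    (fun i j => by
      simpa [neg_add_eq_sub] using (hmem _ _).mp (hanti (show ρ i - j ≤ ρ i by omega) (heF i)))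
    (fun f hf p => hFe (-p) ((hmem _ _).mpr (by simpa using hgraded f hf p)))
  refine ⟨hdecr, htop, hbot, ?_, fun i => single (-ρ i) (e i),
    (Basis.span hli).map (LinearEquiv.ofEq _ _ hspan),
    fun i j => by simp [pow_apply_single_of_shift hT]⟩
  calc M = ⨆ p, (M.comap (lsingle p)).map (lsingle p) := M.eq_iSup_map_lsingle_comap hgraded
    _ = ⨆ n, (FM n).map (lsingle (-n)) := by
      simp_rw [hFM]
      exact ((Equiv.neg ℤ).iSup_comp (g := fun p => (M.comap (lsingle p)).map (lsingle p))).symm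
end

section
/- Let V and W be finite-dimensional k-vector spaces, let M ⊆ V[t,t⁻¹] be a graded k[t]-submodule containing t^{N₀} · (V ⊗ k[t]) for some N₀ ∈ ℕ, let N ⊆ W[t,t⁻¹] be a k[t]-submodule, and let f : V → W be k-linear with (f ⊗ id)(M) ⊆ N. If the quotient k[t]-module N / (f ⊗ id)(M) has no k[t]-torsion, then f(F_M(n)) = f(V) ∩ F_N(n) for every n ∈ ℤ. (This is the module-theoretic content of the paper's Lemma 'modulo codim two': a morphism of equivariant vector bundles whose cokernel is again a bundle is strict on the associated filtrations, Ξ(f)(F^τ(n, 𝓔)) = Ξ(f)(B(𝓔)) ∩ F^τ(n, 𝓕).) -/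
/-!
The inclusion `⊆` is immediate from `(f ⊗ id)(M) ⊆ N`. Conversely, let `f v ⊗ t^{-n} ∈ N`.
Multiplying by a high power `t^m` pushes it into degree `≥ N₀`, where `t^m · (v ⊗ t^{-n})` lies
in `M`; so `t^m` kills the class of `f v ⊗ t^{-n}` in `N / (f ⊗ id)(M)`, and torsion-freeness
puts `f v ⊗ t^{-n}` itself into `(f ⊗ id)(M)`. Writing it as `(f ⊗ id)(h)` with `h ∈ M` and taking
the degree `-n` component of `h`, which lies in `M` because `M` is graded, gives an element of
`F_M(n)` with image `f v`.
-/

open Finsupp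

section

variable {k ι V W : Type*} [Semiring k] [AddCommMonoid V] [Module k V]
  [AddCommMonoid W] [Module k W]

theorem Finsupp.eq_mapRange_linearMap_of_map_single {f : V →ₗ[k] W}
    {F : (ι →₀ V) →ₗ[k] (ι →₀ W)} (hF : ∀ (p : ι) (v : V), F (single p v) = single p (f v)) :
    F = mapRange.linearMap f :=
  lhom_ext fun p v => by simp [hF]

theorem Finsupp.exists_single_mem_of_single_mem_map_mapRange {f : V →ₗ[k] W}
    {M : Submodule k (ι →₀ V)} (hgraded : ∀ g ∈ M, ∀ p : ι, single p (g p) ∈ M)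
    {p : ι} {w : W} (hw : single p w ∈ M.map (mapRange.linearMap f)) :
    ∃ v, single p v ∈ M ∧ f v = w := by
  obtain ⟨h, hM, hh⟩ := hw
  refine ⟨h p, hgraded h hM p, ?_⟩
  simpa using congrArg (· p) hh

end

theorem Finsupp.pow_apply_single_of_apply_single {k W : Type*} [Semiring k] [AddCommMonoid W]
    [Module k W] {T : Module.End k (ℤ →₀ W)}
    (hT : ∀ (p : ℤ) (w : W), T (single p w) = single (p + 1) w) (m : ℕ) (p : ℤ) (w : W) :
    (T ^ m) (single p w) = single (p + m) w := by
  induction m generalizing p with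
  | zero => simp
  | succ m ih =>
    rw [pow_succ, Module.End.mul_apply, hT, ih]
    congr 1
    push_cast
    ring

theorem stmt_5_general {k V W : Type*} [Field k]
    [AddCommGroup V] [Module k V]
    [AddCommGroup W] [Module k W]
    (TW : Module.End k (ℤ →₀ W))
    (hTW : ∀ (p : ℤ) (w : W), TW (Finsupp.single p w) = Finsupp.single (p + 1) w)
    (M : Submodule k (ℤ →₀ V))
    (hgraded : ∀ g ∈ M, ∀ p : ℤ, Finsupp.single p (g p) ∈ M)
    (N₀ : ℕ)
    (hlow : ∀ (p : ℤ) (v : V), (N₀ : ℤ) ≤ p → Finsupp.single p v ∈ M)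
    (N : Submodule k (ℤ →₀ W))
    (f : V →ₗ[k] W)
    (fmap : (ℤ →₀ V) →ₗ[k] (ℤ →₀ W))
    (hfmap : ∀ (p : ℤ) (v : V), fmap (Finsupp.single p v) = Finsupp.single p (f v))
    (hMN : M.map fmap ≤ N)
    (htorsionfree : ∀ g ∈ N, ∀ q : Polynomial k, q ≠ 0 →
      (Polynomial.aeval TW q) g ∈ M.map fmap → g ∈ M.map fmap)
    (n : ℤ) :
    (M.comap (Finsupp.lsingle (-n))).map f
      = LinearMap.range f ⊓ N.comap (Finsupp.lsingle (-n)) := by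
  apply le_antisymm
  · rintro _ ⟨v, hv, rfl⟩
    have hfv : fmap (single (-n) v) ∈ N := hMN ⟨_, hv, rfl⟩
    exact ⟨⟨v, rfl⟩, by rwa [hfmap] at hfv⟩
  rintro _ ⟨⟨v, rfl⟩, hN⟩
  set m := (N₀ + n).toNat
  have hshift :
      Polynomial.aeval TW (Polynomial.X ^ m : Polynomial k) (single (-n) (f v)) ∈ M.map fmap := by
    rw [map_pow, Polynomial.aeval_X, pow_apply_single_of_apply_single hTW, ← hfmap]
    exact ⟨_, hlow _ v (by omega), rfl⟩
  have hmem := htorsionfree _ hN _ (pow_ne_zero _ Polynomial.X_ne_zero) hshift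
  rw [eq_mapRange_linearMap_of_map_single hfmap] at hmem
  exact exists_single_mem_of_single_mem_map_mapRange hgraded hmem

/-- Strictness of morphisms on associated filtrations: if `M ⊆ V[t,t⁻¹]` is a graded
`k[t]`-submodule containing `t^{N₀}·(V ⊗ k[t])`, `N ⊆ W[t,t⁻¹]` is a `k[t]`-submodule,
`f : V → W` is linear with `(f ⊗ id)(M) ⊆ N`, and the quotient `N / (f ⊗ id)(M)` has no
`k[t]`-torsion, then `f (F_M(n)) = f(V) ∩ F_N(n)` for every `n`. Here `V[t,t⁻¹]` is
modelled as `ℤ →₀ V`, `TV`/`TW` are the multiplication-by-`t` operators, and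
`F_M(n) = {v | v ⊗ t^{-n} ∈ M}`. -/
theorem stmt_5 {k V W : Type*} [Field k]
    [AddCommGroup V] [Module k V] [FiniteDimensional k V]
    [AddCommGroup W] [Module k W] [FiniteDimensional k W]
    (TV : Module.End k (ℤ →₀ V))
    (hTV : ∀ (p : ℤ) (v : V), TV (Finsupp.single p v) = Finsupp.single (p + 1) v)
    (TW : Module.End k (ℤ →₀ W))
    (hTW : ∀ (p : ℤ) (w : W), TW (Finsupp.single p w) = Finsupp.single (p + 1) w)
    (M : Submodule k (ℤ →₀ V))
    (hTM : ∀ g ∈ M, TV g ∈ M)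
    (hgraded : ∀ g ∈ M, ∀ p : ℤ, Finsupp.single p (g p) ∈ M)
    (N₀ : ℕ)
    (hlow : ∀ (p : ℤ) (v : V), (N₀ : ℤ) ≤ p → Finsupp.single p v ∈ M)
    (N : Submodule k (ℤ →₀ W))
    (hTN : ∀ g ∈ N, TW g ∈ N)
    (f : V →ₗ[k] W)
    (fmap : (ℤ →₀ V) →ₗ[k] (ℤ →₀ W))
    (hfmap : ∀ (p : ℤ) (v : V), fmap (Finsupp.single p v) = Finsupp.single p (f v))
    (hMN : M.map fmap ≤ N)
    (htorsionfree : ∀ g ∈ N, ∀ q : Polynomial k, q ≠ 0 →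
      (Polynomial.aeval TW q) g ∈ M.map fmap → g ∈ M.map fmap)
    (n : ℤ) :
    (M.comap (Finsupp.lsingle (-n))).map f
      = LinearMap.range f ⊓ N.comap (Finsupp.lsingle (-n)) :=
  stmt_5_general TW hTW M hgraded N₀ hlow N f fmap hfmap hMN htorsionfree n
end
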